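/- Let J ⊆ {1,…,n} be a proper subset with |J| ≥ 2, let r have positive entries, and consider any ℓ with ∑_{j∈J} r_j − 2·min_{j∈J} r_j < ℓ < ∑_{j∈J} r_j. Then the vector (r_J, ℓ) ∈ ℝ^{|J|+1} lies in the favorable chamber: for every proper subset I of J, ∑_{i∈I} r_i < ℓ + ∑_{j∈J∖I} r_j and ∑_{i∈I} r_i + ℓ > ∑_{j∈J∖I} r_j whenever one also includes the last coordinate; equivalently, after normalization, the last coordinate plus any other coordinate exceeds 1. -/
import Mathlib


open Finset

theorem stmt16 (s : ℕ) (hs : 2 ≤ s) (r : Fin s → ℝ) (hr : ∀ j, 0 < r j) (ℓ : ℝ)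
    (hl1 : ∑ j, r j - 2 * Finset.univ.inf'
      (Finset.univ_nonempty_iff.mpr (Fin.pos_iff_nonempty.mp (by omega))) r < ℓ)
    (hl2 : ℓ < ∑ j, r j) :
    (∀ I : Finset (Fin s), I ≠ Finset.univ →
      ∑ i ∈ I, r i < ℓ + ∑ i ∈ Finset.univ \ I, r i) ∧
    (∀ k : Fin s, (2 / (∑ j, r j + ℓ)) * ℓ + (2 / (∑ j, r j + ℓ)) * r k > 1) := by
  set ne : (Finset.univ : Finset (Fin s)).Nonempty :=
    Finset.univ_nonempty_iff.mpr (Fin.pos_iff_nonempty.mp (by omega))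
  have hinf : ∀ k : Fin s, Finset.univ.inf' ne r ≤ r k := fun k =>
    Finset.inf'_le r (Finset.mem_univ k)
  have hinfpos : 0 < Finset.univ.inf' ne r := by
    obtain ⟨k, _, hk⟩ := Finset.exists_mem_eq_inf' ne r
    rw [hk]; exact hr k
  constructor
  · intro I hI
    obtain ⟨j, hj⟩ : ∃ j, j ∉ I := by
      by_contra h; push_neg at h
      exact hI (Finset.eq_univ_iff_forall.mpr h)
    have hsum : ∑ i ∈ I, r i + ∑ i ∈ Finset.univ \ I, r i = ∑ j, r j := by
      rw [add_comm, Finset.sum_sdiff (Finset.subset_univ I)]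
    have hle : r j ≤ ∑ i ∈ Finset.univ \ I, r i := by
      apply Finset.single_le_sum (fun i _ => (hr i).le)
      simp [hj]
    have := hinf j
    linarith
  · intro k
    have hsum_ge : r k ≤ ∑ j, r j :=
      Finset.single_le_sum (fun i _ => (hr i).le) (Finset.mem_univ k)
    have hS : 0 < ∑ j, r j + ℓ := by
      have := hinf k
      linarith
    rw [gt_iff_lt, ← sub_pos]
    have key : 0 < ℓ + 2 * r k - ∑ j, r j := by
      have := hinf k; linarith
    have : (2 / (∑ j, r j + ℓ)) * ℓ + (2 / (∑ j, r j + ℓ)) * r k - 1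
        = (ℓ + 2 * r k - ∑ j, r j) / (∑ j, r j + ℓ) := by
      field_simp; ring
    rw [this]
    exact div_pos key hS
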